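/- arXiv:2509.09788 — 2 statements merged into one kernel-verified Lean document; each statement's English description precedes it below -/
import Mathlib

section
/- Let X be a countably infinite set and let H ≤ Sym(X) be a subgroup whose action on X is k-transitive for every k ∈ ℕ. If H ∩ Sym_f(X) = {1}, i.e. the only finitely supported permutation in H is the identity, then H is mixed identity free. -/
/-- A group `H` is mixed identity free if for every nontrivial element `w` of the free
product `H ∗ ℤ` there is a homomorphism `φ : H ∗ ℤ → H` restricting to the identity on `H`
with `φ w ≠ 1`. -/
def MixedIdentityFree (H : Type*) [Group H] : Prop :=
  ∀ w : Monoid.Coprod H (Multiplicative ℤ), w ≠ 1 →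
    ∃ φ : Monoid.Coprod H (Multiplicative ℤ) →* H,
      (∀ h : H, φ (Monoid.Coprod.inl h) = h) ∧ φ w ≠ 1

/-- The action of a group `H` on `Ω` via `ρ : H →* Equiv.Perm Ω` is `k`-transitive:
`Ω` has at least `k` points, and any `k`-tuple of pairwise distinct points can be carried
to any other. -/
def IsKTransitive {H : Type*} [Group H] {Ω : Type*} (ρ : H →* Equiv.Perm Ω) (k : ℕ) :
    Prop :=
  Nonempty (Fin k ↪ Ω) ∧ ∀ x y : Fin k ↪ Ω, ∃ h : H, ∀ i : Fin k, ρ h (x i) = y i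

/-!
Write a nontrivial `w ∈ H ∗ ℤ` in reduced form `g₁ t^n₁ g₂ t^n₂ ⋯ g_k t^n_k h₀` with all `nᵢ ≠ 0`
and `g₂, …, g_k ≠ 1`; the latter then have infinite support. Follow a point `x₀` through the word
from the right: for each `t^nᵢ` lay down a path of `|nᵢ|` steps through fresh points, ending at a
point `q` which `gᵢ` moves to yet another fresh point, and for the last step pick `q` with
`g₁ q ≠ x₀`. These prescriptions are realised by a product `τ` of disjoint cycles, and every `t`
agreeing with `τ` on a certain finite set satisfies `w(t) x₀ ≠ x₀`. High transitivity finds such a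
`t` in `H`.
-/

open Equiv

variable {X : Type*}

theorem Equiv.Perm.apply_mem_iff_of_fixes_compl {c : Perm X} {C : Set X}
    (hc : ∀ x ∉ C, c x = x) (x : X) : c x ∈ C ↔ x ∈ C := by
  by_cases hx : x ∈ C
  · exact iff_of_true (by_contra fun h => h (by rwa [c.injective (hc _ h)])) hx
  · rw [hc x hx]

theorem Equiv.Perm.zpow_apply_eq_of_eqOn {t c : Perm X} {C : Set X} (hc : ∀ x ∉ C, c x = x)
    (ht : ∀ x ∈ C, t x = c x) (n : ℤ) : ∀ x ∈ C, (t ^ n) x = (c ^ n) x := by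
  have hmem : ∀ x ∈ C, c x ∈ C := fun x => (Perm.apply_mem_iff_of_fixes_compl hc x).2
  have hmem_inv : ∀ x ∈ C, c⁻¹ x ∈ C := fun x hx =>
    (Perm.apply_mem_iff_of_fixes_compl hc _).1 (by simpa using hx)
  induction n using Int.induction_on with
  | zero => simp
  | succ k ih =>
    intro x hx
    rw [zpow_add_one, zpow_add_one, Perm.mul_apply, Perm.mul_apply, ht x hx, ih _ (hmem x hx)]
  | pred k ih =>
    intro x hx
    have htinv : t⁻¹ x = c⁻¹ x := by
      rw [Perm.inv_eq_iff_eq, ht _ (hmem_inv x hx)]; simp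
    rw [zpow_sub_one, zpow_sub_one, Perm.mul_apply, Perm.mul_apply, htinv, ih _ (hmem_inv x hx)]

theorem Equiv.Perm.eqOn_of_eqOn_mul {t c τ : Perm X} {C D : Set X} (hc : ∀ x ∉ C, c x = x)
    (hτ : ∀ x ∉ D, τ x = x) (hCD : _root_.Disjoint C D) (ht : ∀ x ∈ C ∪ D, t x = (c * τ) x) :
    (∀ x ∈ C, t x = c x) ∧ ∀ x ∈ D, t x = τ x := by
  refine ⟨fun x hx => ?_, fun x hx => ?_⟩
  · rw [ht x (Or.inl hx), Perm.mul_apply, hτ x (Set.disjoint_left.mp hCD hx)]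
  · rw [ht x (Or.inr hx), Perm.mul_apply,
      hc _ (Set.disjoint_right.mp hCD ((Perm.apply_mem_iff_of_fixes_compl hτ x).2 hx))]

theorem Equiv.Perm.exists_zpow_apply_eq [Infinite X] (E : Finset X) {p q : X} (hpq : p ≠ q)
    (hp : p ∉ E) (hq : q ∉ E) {n : ℤ} (hn : n ≠ 0) :
    ∃ (c : Perm X) (C : Finset X),
      p ∈ C ∧ _root_.Disjoint C E ∧ (∀ x ∉ C, c x = x) ∧ (c ^ n) p = q := by
  classical
  obtain ⟨M, hME, hMcard⟩ :=
    (insert p (insert q E)).finite_toSet.infinite_compl.exists_subset_card_eq (n.natAbs - 1)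
  have hM : ∀ x ∈ M, x ≠ p ∧ x ≠ q ∧ x ∉ E := fun x hx => by
    simpa [not_or] using hME hx
  -- `L.formPerm` is the cycle `p ↦ m₁ ↦ ⋯ ↦ q ↦ p` through the `|n| - 1` fresh points of `M`
  set L := (p :: M.toList) ++ [q] with hL
  have hmemL : ∀ x, x ∈ L ↔ x = p ∨ x ∈ M ∨ x = q := by simp [L]
  have hnodup : L.Nodup := by
    simp only [L, List.cons_append, List.nodup_cons, List.nodup_append, List.mem_append,
      Finset.mem_toList]
    refine ⟨?_, M.nodup_toList, by simp, fun a ha b hb => ?_⟩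
    · rintro (h | h)
      exacts [(hM p h).1 rfl, hpq (List.mem_singleton.mp h)]
    · rw [List.mem_singleton.mp hb]
      exact (hM a ha).2.1
  have hlen : (p :: M.toList).length = n.natAbs := by
    simp [hMcard]; omega
  refine ⟨L.formPerm ^ n.sign, L.toFinset, by simp [hmemL], ?_, fun x hx => ?_, ?_⟩
  · refine Finset.disjoint_left.mpr fun x hx => ?_
    rcases (hmemL x).1 (List.mem_toFinset.mp hx) with rfl | hx | rfl
    exacts [hp, (hM x hx).2.2, hq]
  · exact Perm.zpow_apply_eq_self_of_apply_eq_self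
      (List.formPerm_apply_of_notMem (by simpa using hx)) _
  · rw [← zpow_mul, Int.sign_mul_self, zpow_natCast, ← hlen]
    have := List.formPerm_pow_apply_getElem L hnodup (p :: M.toList).length 0 (by rw [hL]; simp)
    simpa [L] using this

theorem Equiv.Perm.exists_extension_zpow_apply_eq [Infinite X] [DecidableEq X] {τ' : Perm X}
    {D' E : Finset X} (hτ' : ∀ x ∉ D', τ' x = x) (hD'E : _root_.Disjoint D' E) {p q : X}
    (hpq : p ≠ q) (hp : p ∉ D' ∪ E) (hq : q ∉ D' ∪ E) {n : ℤ} (hn : n ≠ 0) :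
    ∃ (τ : Perm X) (D : Finset X), (∀ x ∉ D, τ x = x) ∧ _root_.Disjoint D E ∧
      ∀ t : Perm X, (∀ x ∈ D, t x = τ x) → (∀ x ∈ D', t x = τ' x) ∧ (t ^ n) p = q := by
  obtain ⟨c, C, hpC, hCD'E, hc, hcpq⟩ := Perm.exists_zpow_apply_eq (D' ∪ E) hpq hp hq hn
  have hCD' : _root_.Disjoint C D' := Finset.disjoint_of_subset_right Finset.subset_union_left hCD'E
  refine ⟨c * τ', C ∪ D', fun x hx => ?_, ?_, fun t ht => ?_⟩
  · rw [Finset.mem_union, not_or] at hx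
    rw [Perm.mul_apply, hτ' x hx.2, hc x hx.1]
  · exact Finset.disjoint_union_left.mpr
      ⟨Finset.disjoint_of_subset_right Finset.subset_union_right hCD'E, hD'E⟩
  · obtain ⟨htc, htτ'⟩ := Perm.eqOn_of_eqOn_mul (C := C) (D := D') hc hτ'
      (Finset.disjoint_coe.mpr hCD') (fun x hx => ht x (by simpa using hx))
    exact ⟨htτ', (Perm.zpow_apply_eq_of_eqOn hc htc n p hpC).trans hcpq⟩

section Words

open Monoid.Coprod

variable {G : Type*} [Group G]

def evalWord (t : G) (l : List (G × ℤ)) : G := (l.map fun a => a.1 * t ^ a.2).prod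

@[simp]
theorem evalWord_nil (t : G) : evalWord t [] = 1 := rfl

@[simp]
theorem evalWord_cons (t : G) (a : G × ℤ) (l : List (G × ℤ)) :
    evalWord t (a :: l) = a.1 * t ^ a.2 * evalWord t l := rfl

theorem map_evalWord {K : Type*} [Group K] (f : G →* K) (t : G) (l : List (G × ℤ)) :
    f (evalWord t l) = evalWord (f t) (l.map (Prod.map f id)) := by
  induction l with
  | nil => simp
  | cons a l ih => simp [ih]

def coprodWord (l : List (G × ℤ)) : Monoid.Coprod G (Multiplicative ℤ) :=
  (l.map fun a => inl a.1 * inr (Multiplicative.ofAdd a.2)).prod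

@[simp]
theorem coprodWord_nil : coprodWord ([] : List (G × ℤ)) = 1 := rfl

@[simp]
theorem coprodWord_cons (a : G × ℤ) (l : List (G × ℤ)) :
    coprodWord (a :: l) = inl a.1 * inr (Multiplicative.ofAdd a.2) * coprodWord l := rfl

theorem lift_coprodWord (t : G) (l : List (G × ℤ)) :
    lift (MonoidHom.id G) (zpowersHom G t) (coprodWord l) = evalWord t l := by
  induction l with
  | nil => simp
  | cons a l ih => simp [ih]

def IsReducedWord (l : List (G × ℤ)) : Prop := (∀ a ∈ l, a.2 ≠ 0) ∧ ∀ a ∈ l.tail, a.1 ≠ 1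

theorem exists_inr_mul_coprodWord (k : ℤ) {l : List (G × ℤ)} (hl : IsReducedWord l) :
    ∃ l' : List (G × ℤ), inr (Multiplicative.ofAdd k) * coprodWord l = coprodWord l' ∧
      IsReducedWord l' := by
  by_cases hk : k = 0
  · exact ⟨l, by simp [hk], hl⟩
  obtain ⟨hn, h1⟩ := hl
  rcases l with _ | ⟨⟨a, n⟩, l⟩
  · exact ⟨[(1, k)], by simp, by simp [IsReducedWord, hk]⟩
  by_cases ha : a = 1
  · subst ha
    have hmerge : inr (Multiplicative.ofAdd k) * coprodWord ((1, n) :: l) =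
        inr (Multiplicative.ofAdd (k + n)) * coprodWord l := by
      simp [ofAdd_add, mul_assoc]
    simp only [List.mem_cons, forall_eq_or_imp, List.tail_cons] at hn h1
    by_cases hkn : k + n = 0
    · refine ⟨l, by rw [hmerge, hkn]; simp, hn.2, fun a ha => h1 a (List.mem_of_mem_tail ha)⟩
    · refine ⟨(1, k + n) :: l, by rw [hmerge]; simp, ?_, h1⟩
      simpa [hkn] using hn.2
  · refine ⟨(1, k) :: (a, n) :: l, by simp, ?_, ?_⟩
    · simpa [hk] using hn
    · simpa [ha] using h1

theorem exists_eq_coprodWord_mul_inl (w : Monoid.Coprod G (Multiplicative ℤ)) :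
    ∃ (l : List (G × ℤ)) (g : G), w = coprodWord l * inl g ∧ IsReducedWord l := by
  induction w using Monoid.Coprod.induction_on' with
  | one => exact ⟨[], 1, by simp, by simp [IsReducedWord]⟩
  | inl_mul m w ih =>
    obtain ⟨l, g, rfl, hl⟩ := ih
    rcases l with _ | ⟨⟨a, n⟩, l⟩
    · exact ⟨[], m * g, by simp, hl⟩
    · exact ⟨(m * a, n) :: l, g, by simp [mul_assoc], by simpa [IsReducedWord] using hl⟩
  | inr_mul z w ih =>
    obtain ⟨l, g, rfl, hl⟩ := ih
    obtain ⟨l', hl', hred⟩ := exists_inr_mul_coprodWord (Multiplicative.toAdd z) hl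
    exact ⟨l', g, by rw [← mul_assoc, ← hl', ofAdd_toAdd], hred⟩

end Words

theorem Equiv.Perm.exists_evalWord_apply_notMem [Infinite X] [DecidableEq X]
    (l : List (Perm X × ℤ)) (hl : ∀ a ∈ l, a.2 ≠ 0 ∧ {x | a.1 x ≠ x}.Infinite) (p : X) :
    ∃ (τ : Perm X) (D : Finset X), (∀ x ∉ D, τ x = x) ∧ evalWord τ l p ∉ D ∧
      ∀ t : Perm X, (∀ x ∈ D, t x = τ x) → evalWord t l p = evalWord τ l p := by
  induction l with
  | nil => exact ⟨1, ∅, fun _ _ => rfl, Finset.notMem_empty _, fun _ _ => rfl⟩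
  | cons a l ih =>
    obtain ⟨h, n⟩ := a
    simp only [List.mem_cons, forall_eq_or_imp] at hl
    obtain ⟨⟨hn, hh⟩, hl⟩ := hl
    obtain ⟨τ', D', hτ', he, hτ'D'⟩ := ih hl
    set e := evalWord τ' l p
    set S := insert e D'
    -- `q` is moved by `h`, and neither `q` nor `h q` lies in the finite set `S`
    obtain ⟨q, hhq, hqS⟩ := hh.exists_notMem_finset (S ∪ S.image ⇑h⁻¹)
    rw [Finset.mem_union, not_or, Finset.mem_image] at hqS
    have hq : q ∉ S := hqS.1
    have hhqS : h q ∉ S := fun hc => hqS.2 ⟨h q, hc, by simp⟩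
    simp only [S, Finset.mem_insert, not_or] at hq hhqS
    obtain ⟨τ, D, hτ, hDhq, hext⟩ := Perm.exists_extension_zpow_apply_eq hτ'
      (Finset.disjoint_singleton_right.mpr hhqS.2) (Ne.symm hq.1) (by simp [he, Ne.symm hhqS.1])
      (by simp [hq.2, Ne.symm hhq]) hn
    have key : ∀ t : Perm X, (∀ x ∈ D, t x = τ x) → evalWord t ((h, n) :: l) p = h q := by
      intro t ht
      obtain ⟨htD', htn⟩ := hext t ht
      rw [evalWord_cons, Perm.mul_apply, Perm.mul_apply, hτ'D' t htD', htn]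
    refine ⟨τ, D, hτ, ?_, fun t ht => (key t ht).trans (key τ fun _ _ => rfl).symm⟩
    rw [key τ fun _ _ => rfl]
    exact Finset.disjoint_singleton_right.mp hDhq

theorem Equiv.Perm.exists_evalWord_mul_ne_one [Infinite X] [DecidableEq X] (g h₀ : Perm X)
    {n : ℤ} (hn : n ≠ 0) (l : List (Perm X × ℤ))
    (hl : ∀ a ∈ l, a.2 ≠ 0 ∧ {x | a.1 x ≠ x}.Infinite) :
    ∃ (τ : Perm X) (D : Finset X),
      ∀ t : Perm X, (∀ x ∈ D, t x = τ x) → evalWord t ((g, n) :: l) * h₀ ≠ 1 := by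
  obtain ⟨x₀⟩ : Nonempty X := inferInstance
  obtain ⟨τ', D', hτ', he, hτ'D'⟩ := Perm.exists_evalWord_apply_notMem l hl (h₀ x₀)
  set e := evalWord τ' l (h₀ x₀)
  obtain ⟨q, hq⟩ := Infinite.exists_notMem_finset (insert (g⁻¹ x₀) (insert e D'))
  simp only [Finset.mem_insert, not_or] at hq
  obtain ⟨τ, D, -, -, hext⟩ := Perm.exists_extension_zpow_apply_eq hτ'
    (Finset.disjoint_empty_right D') (Ne.symm hq.2.1) (by simpa using he) (by simpa using hq.2.2) hn
  refine ⟨τ, D, fun t ht hone => hq.1 ?_⟩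
  obtain ⟨htD', htn⟩ := hext t ht
  have := congrArg (· x₀) hone
  simp only [evalWord_cons, Perm.mul_apply, Perm.one_apply, hτ'D' t htD', htn] at this
  rw [Perm.eq_inv_iff_eq, this]

theorem IsKTransitive.exists_apply_eq {G : Type*} [Group G] {Ω : Type*} {ρ : G →* Perm Ω}
    {D : Finset Ω} (hD : IsKTransitive ρ D.card) (τ : Perm Ω) :
    ∃ g : G, ∀ x ∈ D, ρ g x = τ x := by
  let x : Fin D.card ↪ Ω := D.equivFin.symm.toEmbedding.trans (Function.Embedding.subtype _)
  obtain ⟨g, hg⟩ := hD.2 x (x.trans τ.toEmbedding)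
  exact ⟨g, fun y hy => by simpa [x] using hg (D.equivFin ⟨y, hy⟩)⟩

theorem statement9_general {X : Type} [Infinite X]
    (H : Subgroup (Equiv.Perm X))
    (htrans : ∀ k : ℕ, IsKTransitive H.subtype k)
    (hfs : ∀ π : Equiv.Perm X, π ∈ H → {x | π x ≠ x}.Finite → π = 1) :
    MixedIdentityFree H := by
  classical
  intro w hw
  obtain ⟨l, g, rfl, hexp, hcoef⟩ := exists_eq_coprodWord_mul_inl w
  suffices ∃ t : H, evalWord t l * g ≠ 1 by
    obtain ⟨t, ht⟩ := this
    exact ⟨Monoid.Coprod.lift (MonoidHom.id H) (zpowersHom H t),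
      Monoid.Coprod.lift_apply_inl _ _, by simpa [lift_coprodWord] using ht⟩
  rcases l with _ | ⟨⟨a, n⟩, l⟩
  · exact ⟨1, fun hg => hw (by simp_all)⟩
  have hinf : ∀ b ∈ l.map (Prod.map H.subtype id), b.2 ≠ 0 ∧ {x | b.1 x ≠ x}.Infinite := by
    simp only [List.mem_map]
    rintro _ ⟨b, hb, rfl⟩
    exact ⟨hexp _ (List.mem_cons_of_mem _ hb),
      fun hfin => hcoef _ hb (Subtype.ext (hfs _ b.1.2 hfin))⟩
  obtain ⟨τ, D, hτ⟩ :=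
    Perm.exists_evalWord_mul_ne_one (a : Perm X) g (hexp _ List.mem_cons_self) _ hinf
  obtain ⟨t, ht⟩ := (htrans D.card).exists_apply_eq τ
  refine ⟨t, fun hone => hτ t ht ?_⟩
  have hcoe := congrArg H.subtype hone
  rw [map_mul, map_evalWord, map_one] at hcoe
  simpa using hcoe

/-- Let `X` be countably infinite and `H ≤ Sym(X)` a subgroup whose action on `X` is
`k`-transitive for every `k`. If the only finitely supported permutation in `H` is the
identity, then `H` is mixed identity free. -/
theorem statement9 {X : Type} [Countable X] [Infinite X]
    (H : Subgroup (Equiv.Perm X))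
    (htrans : ∀ k : ℕ, IsKTransitive H.subtype k)
    (hfs : ∀ π : Equiv.Perm X, π ∈ H → {x | π x ≠ x}.Finite → π = 1) :
    MixedIdentityFree H :=
  statement9_general H htrans hfs
end

section
/- Let G₀ be a group, let s ∈ G₀ be a nontrivial element, let G = G₀ × ℤ with central element z = (1,1), and view Sym(G) as acting on the set G. Let A ⊆ ℕ be a set with 0 ∈ A and let σ ∈ Sym(G) be the product of the pairwise disjoint transpositions (z^a, z^a s) for a ∈ A. Let H ≤ Sym(G) be any subgroup containing σ and the left translation by z. Then for every n ∈ ℕ there exist an element τ ∈ H and a set B ⊆ {m ∈ ℕ : m ≥ n} such that τ is the product of the transposition (1, s) with the pairwise disjoint transpositions (z^b, z^b s) for b ∈ B. -/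
/-- `σ ∈ Sym(G₀ × ℤ)` is the product of the pairwise disjoint transpositions
`(z^a, z^a s)` for `a ∈ B`, where `z = (1,1)`, so `z^a = (1, a)` and `z^a s = (s, a)`:
it exchanges `(1, a)` and `(s, a)` for each `a ∈ B` and fixes every other point. -/
def IsDisjointTranspProd (G₀ : Type) [Group G₀] (s : G₀) (B : Set ℕ)
    (σ : Equiv.Perm (G₀ × Multiplicative ℤ)) : Prop :=
  (∀ a ∈ B,
    σ (1, Multiplicative.ofAdd (a : ℤ)) = (s, Multiplicative.ofAdd (a : ℤ)) ∧
    σ (s, Multiplicative.ofAdd (a : ℤ)) = (1, Multiplicative.ofAdd (a : ℤ))) ∧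
  ∀ x : G₀ × Multiplicative ℤ,
    (∀ a ∈ B, x ≠ (1, Multiplicative.ofAdd (a : ℤ)) ∧
      x ≠ (s, Multiplicative.ofAdd (a : ℤ))) → σ x = x

/-!
Write `P(S)` for the product of the transpositions `((1, m), (s, m))`, `m ∈ S`, in `Sym(G₀ × M)`.
Then `P(S) P(T) = P(S ∆ T)`, and conjugating `P(S)` by the translation by `z^n = (1, t^n)` gives
`P(t^n S)`. So if `P(C) ∈ H` with `0 ∈ C` and `C \ {0} ⊆ [n, ∞)`, and `n ∈ C` with `n ≠ 0`, then
`P(C) · z^n P(C) z^{-n} = P(C ∆ (C + n)) ∈ H`: here `n` cancels against `0 + n` while `0` survives,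
so `C ∆ (C + n) \ {0} ⊆ [n + 1, ∞)`. Starting from `C = A` and iterating proves the theorem.
-/

open Equiv Set
open scoped Pointwise symmDiff

theorem Equiv.mulLeft_pow {G : Type*} [Group G] (a : G) (n : ℕ) :
    Equiv.mulLeft a ^ n = Equiv.mulLeft (a ^ n) :=
  (map_pow (MulAction.toPermHom G G) a n).symm

section TranspProd

variable {G₀ M : Type*} [Group G₀]

open Classical in
noncomputable def transpProd (s : G₀) (S : Set M) : Perm (G₀ × M) :=
  Function.Involutive.toPerm (fun x ↦ (if x.2 ∈ S then swap 1 s x.1 else x.1, x.2)) <| by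
    rintro ⟨g, m⟩
    by_cases hm : m ∈ S <;> simp [hm]

open Classical in
theorem transpProd_apply (s : G₀) (S : Set M) (g : G₀) (m : M) :
    transpProd s S (g, m) = (if m ∈ S then swap 1 s g else g, m) :=
  rfl

theorem transpProd_mul_transpProd (s : G₀) (S T : Set M) :
    transpProd s S * transpProd s T = transpProd s (S ∆ T) := by
  ext ⟨g, m⟩ : 1
  by_cases hS : m ∈ S <;> by_cases hT : m ∈ T <;>
    simp [Perm.mul_apply, transpProd_apply, mem_symmDiff, hS, hT]

theorem mulLeft_mul_transpProd_mul_inv [Group M] (s : G₀) (S : Set M) (t : M) :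
    Equiv.mulLeft ((1, t) : G₀ × M) * transpProd s S * (Equiv.mulLeft (1, t))⁻¹ =
      transpProd s (t • S) := by
  ext ⟨g, m⟩ : 1
  have hmem : m ∈ t • S ↔ t⁻¹ * m ∈ S := mem_smul_set_iff_inv_smul_mem
  by_cases hm : t⁻¹ * m ∈ S <;> simp [Perm.mul_apply, transpProd_apply, hm, hmem]

theorem transpProd_symmDiff_pow_smul_mem [Group M] {s : G₀}
    {H : Subgroup (Perm (G₀ × M))} {t : M} (ht : Equiv.mulLeft ((1, t) : G₀ × M) ∈ H)
    {S : Set M} (hS : transpProd s S ∈ H) (n : ℕ) : transpProd s (S ∆ (t ^ n • S)) ∈ H := by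
  have hconj := mulLeft_mul_transpProd_mul_inv s S (t ^ n)
  rw [← one_pow n, ← Prod.pow_mk, ← mulLeft_pow] at hconj
  rw [← transpProd_mul_transpProd, ← hconj]
  exact mul_mem hS (mul_mem (mul_mem (pow_mem ht n) hS) (inv_mem (pow_mem ht n)))

end TranspProd

local notation "ι" => fun a : ℕ ↦ Multiplicative.ofAdd (a : ℤ)

theorem injective_ofAdd_natCast : Function.Injective ι :=
  fun a b h ↦ by simpa using h

theorem image_ofAdd_natCast_image_add (C : Set ℕ) (n : ℕ) :
    ι '' ((· + n) '' C) = Multiplicative.ofAdd (1 : ℤ) ^ n • ι '' C := by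
  rw [← image_smul, image_image, image_image, ← ofAdd_nsmul]
  congr! 2 with a
  simp [← ofAdd_add, add_comm]

theorem IsDisjointTranspProd.unique {G₀ : Type} [Group G₀] {s : G₀} {C : Set ℕ}
    {σ τ : Perm (G₀ × Multiplicative ℤ)}
    (hσ : IsDisjointTranspProd G₀ s C σ) (hτ : IsDisjointTranspProd G₀ s C τ) : σ = τ := by
  ext x : 1
  by_cases hx : ∃ a ∈ C, x = (1, .ofAdd (a : ℤ)) ∨ x = (s, .ofAdd (a : ℤ))
  · obtain ⟨a, ha, rfl | rfl⟩ := hx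
    · rw [(hσ.1 a ha).1, (hτ.1 a ha).1]
    · rw [(hσ.1 a ha).2, (hτ.1 a ha).2]
  · push Not at hx
    rw [hσ.2 x hx, hτ.2 x hx]

theorem isDisjointTranspProd_transpProd {G₀ : Type} [Group G₀] (s : G₀) (C : Set ℕ) :
    IsDisjointTranspProd G₀ s C (transpProd s (ι '' C)) := by
  refine ⟨fun a ha ↦ by simp [transpProd_apply, mem_image_of_mem _ ha], ?_⟩
  classical
  rintro ⟨g, m⟩ hx
  rw [transpProd_apply]
  split_ifs with hm
  · obtain ⟨a, ha, rfl⟩ := hm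
    obtain ⟨h1, hs⟩ := hx a ha
    rw [swap_apply_of_ne_of_ne (by simpa using h1) (by simpa using hs)]
  · rfl

theorem zero_mem_symmDiff_image_add {C : Set ℕ} {n : ℕ} (h0 : 0 ∈ C) (hn : n ≠ 0) :
    0 ∈ C ∆ ((· + n) '' C) :=
  Or.inl ⟨h0, fun ⟨_, _, ha⟩ ↦ hn (Nat.eq_zero_of_add_eq_zero_left ha)⟩

theorem succ_le_of_mem_symmDiff_image_add {C : Set ℕ} {n c : ℕ} (h0 : 0 ∈ C) (hn : n ∈ C)
    (hC : ∀ c ∈ C, c ≠ 0 → n ≤ c) (hc : c ∈ C ∆ ((· + n) '' C)) (hc0 : c ≠ 0) : n + 1 ≤ c := by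
  rcases hc with ⟨hcC, hc⟩ | ⟨⟨a, ha, rfl⟩, hc⟩
  · have hcn : c ≠ n := by rintro rfl; exact hc ⟨0, h0, zero_add c⟩
    have := hC c hcC hc0
    omega
  · have ha0 : a ≠ 0 := by rintro rfl; exact hc (by simpa using hn)
    have := hC a ha ha0
    change n + 1 ≤ a + n
    omega

theorem exists_transpProd_mem_forall_ne_zero_le {G₀ : Type} [Group G₀] {s : G₀}
    {H : Subgroup (Perm (G₀ × Multiplicative ℤ))}
    (hz : Equiv.mulLeft ((1, Multiplicative.ofAdd (1 : ℤ)) : G₀ × Multiplicative ℤ) ∈ H)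
    {A : Set ℕ} (h0 : 0 ∈ A) (hA : transpProd s (ι '' A) ∈ H) (n : ℕ) :
    ∃ C : Set ℕ, 0 ∈ C ∧ (∀ c ∈ C, c ≠ 0 → n ≤ c) ∧ transpProd s (ι '' C) ∈ H := by
  induction n with
  | zero => exact ⟨A, h0, fun c _ _ ↦ c.zero_le, hA⟩
  | succ n ih =>
    obtain ⟨C, hC0, hC, hCH⟩ := ih
    by_cases hn : n ∈ C ∧ n ≠ 0
    · refine ⟨C ∆ ((· + n) '' C), zero_mem_symmDiff_image_add hC0 hn.2,
        fun c hc hc0 ↦ succ_le_of_mem_symmDiff_image_add hC0 hn.1 hC hc hc0, ?_⟩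
      rw [image_symmDiff injective_ofAdd_natCast, image_ofAdd_natCast_image_add]
      exact transpProd_symmDiff_pow_smul_mem hz hCH n
    · refine ⟨C, hC0, fun c hc hc0 ↦ ?_, hCH⟩
      have hcn : c ≠ n := by rintro rfl; exact hn ⟨hc, hc0⟩
      have := hC c hc hc0
      omega

theorem statement13_general (G₀ : Type) [Group G₀] (s : G₀)
    (A : Set ℕ) (h0 : 0 ∈ A)
    (σ : Equiv.Perm (G₀ × Multiplicative ℤ))
    (hσ : IsDisjointTranspProd G₀ s A σ)
    (H : Subgroup (Equiv.Perm (G₀ × Multiplicative ℤ)))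
    (hσH : σ ∈ H)
    (hzH : (Equiv.mulLeft ((1, Multiplicative.ofAdd (1 : ℤ)) : G₀ × Multiplicative ℤ)) ∈ H)
    (n : ℕ) :
    ∃ τ ∈ H, ∃ B : Set ℕ, (∀ b ∈ B, n ≤ b) ∧ 0 ∉ B ∧
      IsDisjointTranspProd G₀ s (insert 0 B) τ := by
  rw [hσ.unique (isDisjointTranspProd_transpProd s A)] at hσH
  obtain ⟨C, hC0, hC, hCH⟩ := exists_transpProd_mem_forall_ne_zero_le hzH h0 hσH n
  refine ⟨_, hCH, C \ {0}, fun b hb ↦ hC b hb.1 hb.2, fun h ↦ h.2 rfl, ?_⟩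
  rw [insert_sdiff_self_of_mem hC0]
  exact isDisjointTranspProd_transpProd s C

/-- Lemma 2.6 of the paper. Let `s ≠ 1` in `G₀`, `G = G₀ × ℤ` with `z = (1,1)`, let
`A ⊆ ℕ` contain `0`, and let `σ` be the product of the disjoint transpositions
`(z^a, z^a s)` for `a ∈ A`. If `H ≤ Sym(G)` contains `σ` and the left translation by `z`,
then for every `n` there are `τ ∈ H` and `B ⊆ {m : m ≥ n}` such that `τ` is the product
of the transposition `(1, s)` with the pairwise disjoint transpositions `(z^b, z^b s)`
for `b ∈ B`. -/
theorem statement13 (G₀ : Type) [Group G₀] (s : G₀) (hs : s ≠ 1)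
    (A : Set ℕ) (h0 : 0 ∈ A)
    (σ : Equiv.Perm (G₀ × Multiplicative ℤ))
    (hσ : IsDisjointTranspProd G₀ s A σ)
    (H : Subgroup (Equiv.Perm (G₀ × Multiplicative ℤ)))
    (hσH : σ ∈ H)
    (hzH : (Equiv.mulLeft ((1, Multiplicative.ofAdd (1 : ℤ)) : G₀ × Multiplicative ℤ)) ∈ H)
    (n : ℕ) :
    ∃ τ ∈ H, ∃ B : Set ℕ, (∀ b ∈ B, n ≤ b) ∧ 0 ∉ B ∧
      IsDisjointTranspProd G₀ s (insert 0 B) τ :=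
  statement13_general G₀ s A h0 σ hσ H hσH hzH n
end
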